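/- Let X be a real Hilbert space and let A and B be closed linear subspaces of X such that A ∩ B and A^⊥ ∩ B^⊥ admit well-defined sums (in a finite-dimensional X this is automatic). Then the fixed point set of the operator T = P_A ∘ P_B + P_{A^⊥} ∘ P_{B^⊥} equals (A ∩ B) + (A^⊥ ∩ B^⊥); i.e., T x = x if and only if x = u + w with u ∈ A ∩ B and w ∈ A^⊥ ∩ B^⊥. -/

import Mathlib

namespace Submodule

variable {𝕜 E : Type*} [RCLike 𝕜] [NormedAddCommGroup E] [InnerProductSpace 𝕜 E]

theorem starProjection_add_starProjection_orthogonal_eq_add_iff (K : Submodule 𝕜 E)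
    [K.HasOrthogonalProjection] {y z : E} :
    K.starProjection y + Kᗮ.starProjection z = y + z ↔ y ∈ K ∧ z ∈ Kᗮ := by
  refine ⟨fun h => ?_, fun ⟨hy, hz⟩ => by
    rw [starProjection_eq_self_iff.2 hy, starProjection_eq_self_iff.2 hz]⟩
  -- `y - P_K y ∈ Kᗮ` and `z - P_{Kᗮ} z = P_K z ∈ K` cancel, so both vanish.
  have hsum : (y - K.starProjection y) + K.starProjection z = 0 := by
    rw [starProjection_orthogonal_val] at h
    linear_combination (norm := abel) -h
  have hy : y - K.starProjection y = 0 :=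
    disjoint_def.1 K.orthogonal_disjoint.symm _ (sub_starProjection_mem_orthogonal y)
      (by rw [eq_neg_of_add_eq_zero_left hsum]; exact neg_mem (K.starProjection_apply_mem z))
  rw [hy, zero_add] at hsum
  refine ⟨sub_eq_zero.1 hy ▸ K.starProjection_apply_mem y, ?_⟩
  simpa [hsum] using K.sub_starProjection_mem_orthogonal z

end Submodule

theorem stmt_11 {X : Type*} [NormedAddCommGroup X] [InnerProductSpace ℝ X]
    (A B : Submodule ℝ X) [CompleteSpace A] [CompleteSpace B] (x : X) :
    ((Submodule.orthogonalProjectionOnto A (Submodule.orthogonalProjectionOnto B x : X) : X) +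
        (Submodule.orthogonalProjectionOnto Aᗮ (Submodule.orthogonalProjectionOnto Bᗮ x : X) : X) = x) ↔
      ∃ u ∈ A ⊓ B, ∃ w ∈ Aᗮ ⊓ Bᗮ, x = u + w := by
  simp only [Submodule.coe_orthogonalProjectionOnto_apply]
  nth_rw 3 [← B.starProjection_add_starProjection_orthogonal x]
  rw [A.starProjection_add_starProjection_orthogonal_eq_add_iff]
  constructor
  · rintro ⟨hA, hAperp⟩
    exact ⟨_, ⟨hA, B.starProjection_apply_mem x⟩, _, ⟨hAperp, Bᗮ.starProjection_apply_mem x⟩,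
      (B.starProjection_add_starProjection_orthogonal x).symm⟩
  · rintro ⟨u, ⟨huA, huB⟩, w, ⟨hwA, hwB⟩, rfl⟩
    rw [B.eq_starProjection_of_mem_orthogonal' huB hwB rfl,
      Bᗮ.eq_starProjection_of_mem_orthogonal' hwB (B.le_orthogonal_orthogonal huB) (add_comm u w)]
    exact ⟨huA, hwA⟩
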